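/- arXiv:2201.08485 — 3 statements merged into one kernel-verified Lean document; each statement's English description precedes it below -/
import Mathlib

section
/- Let B be the 4×4 matrix whose columns are the normalisations of the vectors v₁=(1,1,0,0), v₂=(√(1+ε²),1,ε,0), v₃=(√(1+ε²),1,0,ε), v₄=(-1,1,0,0) for 0 < ε < 1. Then B is invertible and its inverse has Frobenius norm √(8ε²+8)/ε, and in particular ‖B^{-1}‖_F ≤ 4/ε. -/
/-!
Write `s = √(1 + ε²)`. The four vectors have norms `√2, √2 s, √2 s, √2`, and the normalised
matrix has the explicit left inverse `ExplicitBasis.basisMatrixInv`, whose squared entries sum to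
`2 + (6 s² + 2) / ε² = (8 ε² + 8) / ε²`. The bound follows from `8 ε² + 8 ≤ 16`.
-/

open Real Matrix

namespace ExplicitBasis

variable (ε : ℝ)

noncomputable def sqrtOneAddSq : ℝ := √(1 + ε ^ 2)

lemma sqrtOneAddSq_sq : sqrtOneAddSq ε ^ 2 = 1 + ε ^ 2 := sq_sqrt (by positivity)

lemma sqrtOneAddSq_pos : 0 < sqrtOneAddSq ε := sqrt_pos.mpr (by positivity)

noncomputable def vectors : Fin 4 → Fin 4 → ℝ :=
  ![![1, 1, 0, 0],
    ![sqrtOneAddSq ε, 1, ε, 0],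
    ![sqrtOneAddSq ε, 1, 0, ε],
    ![-1, 1, 0, 0]]

noncomputable def basisMatrix : Matrix (Fin 4) (Fin 4) ℝ :=
  ![![1 / √2, 1 / √2, 1 / √2, -1 / √2],
    ![1 / √2, 1 / (√2 * sqrtOneAddSq ε), 1 / (√2 * sqrtOneAddSq ε), 1 / √2],
    ![0, ε / (√2 * sqrtOneAddSq ε), 0, 0],
    ![0, 0, ε / (√2 * sqrtOneAddSq ε), 0]]

noncomputable def basisMatrixInv : Matrix (Fin 4) (Fin 4) ℝ :=
  ![![1 / √2, 1 / √2, -(sqrtOneAddSq ε + 1) / (√2 * ε), -(sqrtOneAddSq ε + 1) / (√2 * ε)],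
    ![0, 0, √2 * sqrtOneAddSq ε / ε, 0],
    ![0, 0, 0, √2 * sqrtOneAddSq ε / ε],
    ![-1 / √2, 1 / √2, (sqrtOneAddSq ε - 1) / (√2 * ε), (sqrtOneAddSq ε - 1) / (√2 * ε)]]

lemma sum_sq_vectors (j : Fin 4) :
    ∑ k, vectors ε j k ^ 2 = 2 * ![1, sqrtOneAddSq ε ^ 2, sqrtOneAddSq ε ^ 2, 1] j := by
  fin_cases j <;>
    simp only [vectors, Fin.sum_univ_four, sqrtOneAddSq_sq, Fin.reduceFinMk, cons_val] <;> ring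

lemma basisMatrix_apply (i j : Fin 4) :
    basisMatrix ε i j = vectors ε j i / √(∑ k, vectors ε j k ^ 2) := by
  have hs := sqrtOneAddSq_pos ε
  rw [sum_sq_vectors, sqrt_mul zero_le_two]
  fin_cases i <;> fin_cases j <;>
    simp only [basisMatrix, vectors, zero_div, sqrt_one, sqrt_sq hs.le, Fin.reduceFinMk,
      cons_val] <;>
    field_simp

lemma basisMatrixInv_mul_basisMatrix {ε : ℝ} (hε : ε ≠ 0) :
    basisMatrixInv ε * basisMatrix ε = 1 := by
  have hs := (sqrtOneAddSq_pos ε).ne'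
  ext i j
  rw [mul_apply, Fin.sum_univ_four]
  fin_cases i <;> fin_cases j <;>
    simp only [basisMatrix, basisMatrixInv, one_apply, Fin.reduceEq, if_false, mul_zero,
      Fin.reduceFinMk, cons_val] <;>
    field_simp <;> norm_num

lemma sum_sq_basisMatrixInv {ε : ℝ} (hε : ε ≠ 0) :
    ∑ i, ∑ j, basisMatrixInv ε i j ^ 2 = (8 * ε ^ 2 + 8) / ε ^ 2 := by
  simp only [basisMatrixInv, Fin.sum_univ_four, cons_val, div_pow, mul_pow, neg_sq,
    sq_sqrt zero_le_two]
  field_simp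
  linear_combination 12 * sqrtOneAddSq_sq ε

end ExplicitBasis

/-- Let `B` be the 4×4 matrix whose columns are the Euclidean
normalisations of `v₁ = (1,1,0,0)`, `v₂ = (√(1+ε²),1,ε,0)`, `v₃ = (√(1+ε²),1,0,ε)`,
`v₄ = (-1,1,0,0)`, for `0 < ε < 1`.  Then `B` is invertible, the Frobenius norm of
`B⁻¹` equals `√(8ε² + 8)/ε`, and in particular it is at most `4/ε`. -/
theorem explicit_basis_inverse_norm (ε : ℝ) (hε0 : 0 < ε) (hε1 : ε < 1)
    (v : Fin 4 → Fin 4 → ℝ)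
    (hv : v = ![![1, 1, 0, 0],
                ![Real.sqrt (1 + ε ^ 2), 1, ε, 0],
                ![Real.sqrt (1 + ε ^ 2), 1, 0, ε],
                ![-1, 1, 0, 0]])
    (B : Matrix (Fin 4) (Fin 4) ℝ)
    (hB : ∀ i j, B i j = v j i / Real.sqrt (∑ k, v j k ^ 2)) :
    IsUnit B ∧
    Real.sqrt (∑ i, ∑ j, (B⁻¹ i j) ^ 2) = Real.sqrt (8 * ε ^ 2 + 8) / ε ∧
    Real.sqrt (∑ i, ∑ j, (B⁻¹ i j) ^ 2) ≤ 4 / ε := by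
  have hB' : B = ExplicitBasis.basisMatrix ε := by
    ext i j
    exact (hB i j).trans (hv ▸ (ExplicitBasis.basisMatrix_apply ε i j).symm)
  subst hB'
  have hinv : (ExplicitBasis.basisMatrix ε)⁻¹ = ExplicitBasis.basisMatrixInv ε :=
    inv_eq_left_inv (ExplicitBasis.basisMatrixInv_mul_basisMatrix hε0.ne')
  have hnorm : √(∑ i, ∑ j, ((ExplicitBasis.basisMatrix ε)⁻¹ i j) ^ 2) = √(8 * ε ^ 2 + 8) / ε := by
    rw [hinv, ExplicitBasis.sum_sq_basisMatrixInv hε0.ne', sqrt_div' _ (sq_nonneg ε),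
      sqrt_sq hε0.le]
  have hsqrt_le : √(8 * ε ^ 2 + 8) ≤ 4 := sqrt_le_iff.mpr ⟨by norm_num, by nlinarith⟩
  exact ⟨.of_mul_eq_one_right _ (ExplicitBasis.basisMatrixInv_mul_basisMatrix hε0.ne'), hnorm,
    hnorm ▸ div_le_div_of_nonneg_right hsqrt_le hε0.le⟩
end

section
/- (Characterisation of light-sink connections) A u(n)-valued connection A on the causal diamond satisfies A ◁ P^A_{y←z_y} = A (i.e. gauging by the field y ↦ P^A_{y←z_y} fixes A) if and only if A_y(∂_t) = A_y(∂_r) for all y, where ∂_r is the outward spatial radial direction. Equivalently, A vanishes on the lightlike radial direction v_{y←z_y} = (1/√2)(∂_r - ∂_t). -/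
open Matrix

attribute [local instance] Matrix.frobeniusNormedAddCommGroup Matrix.frobeniusNormedSpace
  Matrix.frobeniusNormedRing

/-- Spatial Euclidean norm of a point of Minkowski space `ℝ^{1+3}` (coordinate 0 is time). -/
noncomputable def spatialNorm (y : Fin 4 → ℝ) : ℝ :=
  Real.sqrt (y 1 ^ 2 + y 2 ^ 2 + y 3 ^ 2)

/-- The point `z_y` on the time axis `O` in the future light cone of `y`. -/
noncomputable def zpt (y : Fin 4 → ℝ) : Fin 4 → ℝ :=
  fun i => if i = 0 then y 0 + spatialNorm y else 0


/-!
`U y s` is the transport from `z_y` to `z_y + s (y - z_y)`, so `P_y = U y 1`. Every point of the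
segment `s ↦ z_y + s (y - z_y)`, `s ≥ 0`, has the same apex `z_y`, so by uniqueness for the linear
transport equation `P` restricted to the segment is `s ↦ U y s`. Hence the derivative of `P` at `y`
in the direction `y - z_y` is `-A_y(y - z_y) P_y`, which makes `(A ◁ P)_y(y - z_y) = 0`: gauge
fixing forces `A_y(y - z_y) = 0`. Conversely, if `A` kills `y - z_y` everywhere, every transport
is trivial, `P ≡ 1`, and gauging by the constant field `1` changes nothing.
-/

attribute [local instance] Matrix.frobeniusNormedAlgebra

theorem HasDerivAt.ringInverse {𝕜 R : Type*} [NontriviallyNormedField 𝕜] [NormedRing R]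
    [HasSummableGeomSeries R] [NormedAlgebra 𝕜 R] {c : 𝕜 → R} {c' : R} {s : 𝕜}
    (hc : HasDerivAt c c' s) (hu : IsUnit (c s)) :
    HasDerivAt (fun t => Ring.inverse (c t))
      (-(Ring.inverse (c s) * c' * Ring.inverse (c s))) s := by
  have hinv := hasFDerivAt_ringInverse (𝕜 := 𝕜) hu.unit
  rw [← Ring.inverse_unit, hu.unit_spec] at hinv
  exact (hinv.comp_hasDerivAt s hc).congr_deriv (by simp)

theorem eq_of_hasDerivAt_mul_left {R : Type*} [NormedRing R] [HasSummableGeomSeries R]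
    [NormedAlgebra ℝ R] {B U V : ℝ → R} (hU : ∀ s, HasDerivAt U (B s * U s) s)
    (hV : ∀ s, HasDerivAt V (B s * V s) s) (hunit : ∀ s, IsUnit (U s)) (h0 : U 0 = V 0) :
    U = V := by
  have hderiv : ∀ s, HasDerivAt (fun t => Ring.inverse (U t) * V t) 0 s := fun s =>
    (((hU s).ringInverse (hunit s)).mul (hV s)).congr_deriv <| by
      rw [mul_assoc (Ring.inverse (U s)), mul_assoc (B s), Ring.mul_inverse_cancel _ (hunit s),
        mul_one]
      noncomm_ring
  funext s
  have hconst : Ring.inverse (U s) * V s = Ring.inverse (U 0) * V 0 :=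
    is_const_of_deriv_eq_zero (fun t => (hderiv t).differentiableAt)
      (fun t => (hderiv t).deriv) s 0
  rw [← h0, Ring.inverse_mul_cancel _ (hunit 0)] at hconst
  rw [← one_mul (V s), ← Ring.mul_inverse_cancel _ (hunit s), mul_assoc, hconst, mul_one]

theorem eq_of_hasDerivAt_zero_of_lt {E : Type*} [NormedAddCommGroup E] [NormedSpace ℝ E]
    {f : ℝ → E} {a b : ℝ} (hf : ContinuousWithinAt f (Set.Ioi a) a)
    (hderiv : ∀ s, a < s → HasDerivAt f 0 s) (hab : a < b) : f b = f a := by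
  have hconst : ∀ s ∈ Set.Ioi a, f s = f b := fun s hs =>
    isOpen_Ioi.is_const_of_deriv_eq_zero isPreconnected_Ioi
      (fun t ht => (hderiv t ht).differentiableAt.differentiableWithinAt)
      (fun t ht => (hderiv t ht).deriv) hs hab
  exact tendsto_nhds_unique
    (tendsto_const_nhds.congr' (eventually_nhdsWithin_of_forall fun s hs => (hconst s hs).symm))
    hf.tendsto

noncomputable def lightSegment (y : Fin 4 → ℝ) (s : ℝ) : Fin 4 → ℝ :=
  zpt y + s • (y - zpt y)

theorem lightSegment_one (y : Fin 4 → ℝ) : lightSegment y 1 = y := by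
  simp [lightSegment]

theorem hasDerivAt_lightSegment (y : Fin 4 → ℝ) (s : ℝ) :
    HasDerivAt (lightSegment y) (y - zpt y) s := by
  unfold lightSegment
  simpa using ((hasDerivAt_id s).smul_const (y - zpt y)).const_add (zpt y)

theorem zpt_apply_zero (y : Fin 4 → ℝ) : zpt y 0 = y 0 + spatialNorm y :=
  if_pos rfl

theorem zpt_apply_of_ne_zero (y : Fin 4 → ℝ) {i : Fin 4} (hi : i ≠ 0) : zpt y i = 0 :=
  if_neg hi

theorem spatialNorm_lightSegment (y : Fin 4 → ℝ) {s : ℝ} (hs : 0 ≤ s) :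
    spatialNorm (lightSegment y s) = s * spatialNorm y := by
  have hcoord : ∀ i : Fin 4, i ≠ 0 → lightSegment y s i = s * y i := fun i hi => by
    simp [lightSegment, zpt_apply_of_ne_zero y hi]
  rw [spatialNorm, hcoord 1 (by decide), hcoord 2 (by decide), hcoord 3 (by decide),
    show (s * y 1) ^ 2 + (s * y 2) ^ 2 + (s * y 3) ^ 2 = s ^ 2 * (y 1 ^ 2 + y 2 ^ 2 + y 3 ^ 2)
      by ring, Real.sqrt_mul (sq_nonneg s), Real.sqrt_sq hs, spatialNorm]

theorem zpt_lightSegment (y : Fin 4 → ℝ) {s : ℝ} (hs : 0 ≤ s) :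
    zpt (lightSegment y s) = zpt y := by
  funext i
  by_cases hi : i = 0
  · subst hi
    rw [zpt_apply_zero, zpt_apply_zero, spatialNorm_lightSegment y hs]
    simp only [lightSegment, Pi.add_apply, Pi.smul_apply, Pi.sub_apply, smul_eq_mul,
      zpt_apply_zero]
    ring
  · rw [zpt_apply_of_ne_zero _ hi, zpt_apply_of_ne_zero _ hi]

theorem lightSegment_sub_zpt (y : Fin 4 → ℝ) {s : ℝ} (hs : 0 ≤ s) :
    lightSegment y s - zpt (lightSegment y s) = s • (y - zpt y) := by
  rw [zpt_lightSegment y hs, lightSegment, add_sub_cancel_left]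

theorem lightSegment_lightSegment (y : Fin 4 → ℝ) {s : ℝ} (hs : 0 ≤ s) (r : ℝ) :
    lightSegment (lightSegment y s) r = lightSegment y (r * s) := by
  rw [lightSegment, lightSegment_sub_zpt y hs, zpt_lightSegment y hs, smul_smul, lightSegment]

section Transport

variable {n : ℕ} {A : (Fin 4 → ℝ) → ((Fin 4 → ℝ) →L[ℝ] Matrix (Fin n) (Fin n) ℂ)}
  {U : (Fin 4 → ℝ) → ℝ → Matrix (Fin n) (Fin n) ℂ}

theorem transport_lightSegment_one (hU0 : ∀ y, U y 0 = 1)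
    (hU : ∀ y s, HasDerivAt (U y) (-(A (lightSegment y s) (y - zpt y) * U y s)) s)
    (hUinv : ∀ y s, IsUnit (U y s)) (y : Fin 4 → ℝ) {s : ℝ} (hs : 0 ≤ s) :
    U (lightSegment y s) 1 = U y s := by
  let B : ℝ → Matrix (Fin n) (Fin n) ℂ := fun r => -A (lightSegment y (r * s)) (s • (y - zpt y))
  have hsub : U (lightSegment y s) = fun r => U y (r * s) := by
    refine eq_of_hasDerivAt_mul_left (B := B) (fun r => ?_) (fun r => ?_) (hUinv _)
      (by rw [hU0, zero_mul, hU0])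
    · have h := hU (lightSegment y s) r
      rwa [lightSegment_lightSegment y hs, lightSegment_sub_zpt y hs, ← neg_mul] at h
    · have h := (hU y (r * s)).scomp r (hasDerivAt_mul_const s)
      rw [smul_neg, ← smul_mul_assoc, ← map_smul, ← neg_mul] at h
      exact h
  simpa using congrFun hsub 1

theorem apply_sub_zpt_eq_zero_of_gauge_fixed (hU0 : ∀ y, U y 0 = 1)
    (hU : ∀ y s, HasDerivAt (U y) (-(A (lightSegment y s) (y - zpt y) * U y s)) s)
    (hUinv : ∀ y s, IsUnit (U y s))
    {dP : (Fin 4 → ℝ) → ((Fin 4 → ℝ) →L[ℝ] Matrix (Fin n) (Fin n) ℂ)}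
    (hdP : ∀ y, HasFDerivAt (fun y => U y 1) (dP y) y) {y : Fin 4 → ℝ}
    (hfix : (U y 1)⁻¹ * dP y (y - zpt y) + (U y 1)⁻¹ * A y (y - zpt y) * U y 1
      = A y (y - zpt y)) :
    A y (y - zpt y) = 0 := by
  have hnear : (fun s => U (lightSegment y s) 1) =ᶠ[nhds 1] U y :=
    Filter.eventually_of_mem (Ioi_mem_nhds one_pos) fun s hs =>
      transport_lightSegment_one hU0 hU hUinv y hs.le
  have hP : HasDerivAt (fun s => U (lightSegment y s) 1) (dP y (y - zpt y)) 1 := by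
    have h := (hdP (lightSegment y 1)).comp_hasDerivAt 1 (hasDerivAt_lightSegment y 1)
    rwa [lightSegment_one] at h
  have hU1 := hU y 1
  rw [lightSegment_one] at hU1
  have hdPy : dP y (y - zpt y) = -(A y (y - zpt y) * U y 1) :=
    hP.unique (hU1.congr_of_eventuallyEq hnear)
  rw [← hfix, hdPy]
  noncomm_ring

theorem transport_eq_one_of_apply_sub_zpt_eq_zero
    (hU0 : ∀ y, U y 0 = 1)
    (hU : ∀ y s, HasDerivAt (U y) (-(A (lightSegment y s) (y - zpt y) * U y s)) s)
    (hA : ∀ y, A y (y - zpt y) = 0) (y : Fin 4 → ℝ) : U y 1 = 1 := by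
  have hvanish : ∀ s, 0 < s → A (lightSegment y s) (y - zpt y) = 0 := fun s hs => by
    have h := hA (lightSegment y s)
    rw [lightSegment_sub_zpt y hs.le, map_smul] at h
    exact (smul_eq_zero.mp h).resolve_left hs.ne'
  rw [← hU0 y]
  refine eq_of_hasDerivAt_zero_of_lt (hU y 0).continuousAt.continuousWithinAt
    (fun s hs => ?_) one_pos
  have h := hU y s
  rwa [hvanish s hs, zero_mul, neg_zero] at h

end Transport

theorem light_sink_characterisation_general {n : ℕ}
    (A : (Fin 4 → ℝ) → ((Fin 4 → ℝ) →L[ℝ] Matrix (Fin n) (Fin n) ℂ))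
    (U : (Fin 4 → ℝ) → ℝ → Matrix (Fin n) (Fin n) ℂ)
    (hU0 : ∀ y, U y 0 = 1)
    (hU : ∀ y s, HasDerivAt (U y)
      (-(A (zpt y + s • (y - zpt y)) (y - zpt y) * U y s)) s)
    (hUinv : ∀ y s, IsUnit (U y s))
    (dP : (Fin 4 → ℝ) → ((Fin 4 → ℝ) →L[ℝ] Matrix (Fin n) (Fin n) ℂ))
    (hdP : ∀ y, HasFDerivAt (fun y => U y 1) (dP y) y) :
    (∀ y v, (U y 1)⁻¹ * dP y v + (U y 1)⁻¹ * A y v * U y 1 = A y v)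
      ↔ (∀ y, A y (y - zpt y) = 0) := by
  refine ⟨fun hfix y => apply_sub_zpt_eq_zero_of_gauge_fixed hU0 hU hUinv hdP (hfix y _),
    fun hA y v => ?_⟩
  have hP : (fun x => U x 1) = fun _ => 1 :=
    funext (transport_eq_one_of_apply_sub_zpt_eq_zero hU0 hU hA)
  have hdP0 : dP y = 0 := (hdP y).unique (hP ▸ hasFDerivAt_const 1 y)
  rw [congrFun hP y, hdP0, inv_one]
  simp

/-- **Characterisation of light-sink connections.** A u(n)-valued
connection `A` on the causal diamond satisfies `A ◁ P^A_{y←z_y} = A` if and only if `A`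
vanishes on the lightlike radial direction `y - z_y ∝ (1/√2)(∂_r - ∂_t)` at every point,
i.e. `A_y(∂_t) = A_y(∂_r)` for all `y`.  Here `U y` is the parallel transport along the
straight segment from `z_y` to `y` (parametrised on `[0,1]`), `dP` is the (total)
derivative of the field `y ↦ P^A_{y←z_y} = U y 1`, and the gauged connection is
`(A ◁ P^A)_y(v) = (U y 1)⁻¹ dP_y(v) + (U y 1)⁻¹ A_y(v) U y 1`. -/
theorem light_sink_characterisation {n : ℕ}
    (A : (Fin 4 → ℝ) → ((Fin 4 → ℝ) →L[ℝ] Matrix (Fin n) (Fin n) ℂ))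
    (hA : ∀ y v, (A y v)ᴴ = -(A y v))
    (U : (Fin 4 → ℝ) → ℝ → Matrix (Fin n) (Fin n) ℂ)
    (hU0 : ∀ y, U y 0 = 1)
    (hU : ∀ y s, HasDerivAt (U y)
      (-(A (zpt y + s • (y - zpt y)) (y - zpt y) * U y s)) s)
    (hUinv : ∀ y s, IsUnit (U y s))
    (dP : (Fin 4 → ℝ) → ((Fin 4 → ℝ) →L[ℝ] Matrix (Fin n) (Fin n) ℂ))
    (hdP : ∀ y, HasFDerivAt (fun y => U y 1) (dP y) y) :
    (∀ y v, (U y 1)⁻¹ * dP y v + (U y 1)⁻¹ * A y v * U y 1 = A y v)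
      ↔ (∀ y, A y (y - zpt y) = 0) :=
  light_sink_characterisation_general A U hU0 hU hUinv dP hdP
end

section
/- (Uniqueness of light-sink representative) If φ ∈ H (smooth U(n)-valued maps on the diamond equal to Id on the time axis O) and A ◁ φ is a light-sink connection, then necessarily φ(y) = P^A_{y←z_y} for all y. Consequently (A ◁ φ) ◁ P^{A◁φ}_{y←z_y} = A ◁ P^A_{y←z_y} for every φ ∈ H, so the map sending the H-orbit of A to A ◁ P^A_{y←z_y} is well-defined and each H-orbit contains a unique light-sink connection. -/
open Matrix

attribute [local instance] Matrix.frobeniusNormedAddCommGroup Matrix.frobeniusNormedSpace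
  Matrix.frobeniusNormedRing

attribute [local instance] Matrix.frobeniusNormedAlgebra

/-!
Along the segment `γ s = z_y + s • (y - z_y)`, the gauge-transformed transport
`φ (γ s) * V y s` solves the same linear equation `X' = -A X` as the transport `U y` of `A`,
since `φ` is the gauge relating `A ◁ φ` to `A`. As `A` is skew-Hermitian, `star X₁ * X₂` is
constant for any two solutions; evaluating at `s = 0`, where both equal `Id` because
`φ (z_y) = Id`, shows that `U y 1` is unitary and that `φ y = φ y * V y 1 = U y 1`.
The second claim follows by differentiating this identity.
-/

section Transport

variable {R : Type*} [NormedRing R] [NormedAlgebra ℝ R]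

theorem HasDerivAt.mul_of_gauge {g V : ℝ → R} {g' a q : R} {s : ℝ}
    (hq : g s * q = 1) (hg : HasDerivAt g g' s)
    (hV : HasDerivAt V (-((q * g' + q * a * g s) * V s)) s) :
    HasDerivAt (fun t => g t * V t) (-(a * (g s * V s))) s := by
  refine (hg.mul hV).congr_deriv ?_
  have hgV : g s * ((q * g' + q * a * g s) * V s) = g' * V s + a * (g s * V s) :=
    calc _ = (g s * q) * (g' * V s) + (g s * q) * (a * (g s * V s)) := by noncomm_ring
      _ = _ := by rw [hq, one_mul, one_mul]
  rw [mul_neg, hgV]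
  abel

variable [StarRing R] [ContinuousStar R] [StarModule ℝ R]

theorem HasDerivAt.star_mul_of_skew {X Y : ℝ → R} {a : R} {s : ℝ}
    (ha : star a = -a) (hX : HasDerivAt X (-(a * X s)) s) (hY : HasDerivAt Y (-(a * Y s)) s) :
    HasDerivAt (fun t => star (X t) * Y t) 0 s := by
  refine (hX.star.mul hY).congr_deriv ?_
  rw [star_neg, star_mul, ha]
  noncomm_ring

theorem star_mul_eq_of_skew_transport {X Y : ℝ → R} {a : ℝ → R}
    (ha : ∀ s, star (a s) = -a s)
    (hX : ∀ s, HasDerivAt X (-(a s * X s)) s) (hY : ∀ s, HasDerivAt Y (-(a s * Y s)) s)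
    (t₀ t₁ : ℝ) : star (X t₁) * Y t₁ = star (X t₀) * Y t₀ :=
  have hXY s := (hX s).star_mul_of_skew (ha s) (hY s)
  is_const_of_deriv_eq_zero (fun s => (hXY s).differentiableAt) (fun s => (hXY s).deriv) t₁ t₀

end Transport

theorem hasDerivAt_segment {E : Type*} [NormedAddCommGroup E] [NormedSpace ℝ E]
    (z y : E) (s : ℝ) :
    HasDerivAt (fun t : ℝ => z + t • (y - z)) (y - z) s := by
  simpa using ((hasDerivAt_id s).smul_const (y - z)).const_add z

/-- **Uniqueness of the light-sink representative.** If `φ ∈ H` (smooth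
unitary-valued, `φ = Id` on the time axis `O`) is such that `B := A ◁ φ` is a light-sink
connection (its parallel transports `V y 1 = P^B_{y←z_y}` are all `Id`), then
`φ y = P^A_{y←z_y} = U y 1` for all `y`, and consequently `A ◁ φ = A ◁ P^A_{y←z_y}`,
so that the map sending the `H`-orbit of `A` to `A ◁ P^A_{y←z_y}` is well-defined and
each `H`-orbit contains a unique light-sink connection. -/
theorem light_sink_uniqueness {n : ℕ}
    (A : (Fin 4 → ℝ) → (Fin 4 → ℝ) → Matrix (Fin n) (Fin n) ℂ)
    (hA : ∀ y v, (A y v)ᴴ = -(A y v))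
    (φ : (Fin 4 → ℝ) → Matrix (Fin n) (Fin n) ℂ)
    (hφu : ∀ y, φ y ∈ Matrix.unitaryGroup (Fin n) ℂ)
    (hφO : ∀ y : Fin 4 → ℝ, y 1 = 0 → y 2 = 0 → y 3 = 0 → φ y = 1)
    (dφ : (Fin 4 → ℝ) → ((Fin 4 → ℝ) →L[ℝ] Matrix (Fin n) (Fin n) ℂ))
    (hdφ : ∀ y, HasFDerivAt φ (dφ y) y)
    (U : (Fin 4 → ℝ) → ℝ → Matrix (Fin n) (Fin n) ℂ)
    (hU0 : ∀ y, U y 0 = 1)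
    (hU : ∀ y s, HasDerivAt (U y)
      (-(A (zpt y + s • (y - zpt y)) (y - zpt y) * U y s)) s)
    (dP : (Fin 4 → ℝ) → ((Fin 4 → ℝ) →L[ℝ] Matrix (Fin n) (Fin n) ℂ))
    (hdP : ∀ y, HasFDerivAt (fun y => U y 1) (dP y) y)
    -- `V y` is the parallel transport of `B = A ◁ φ` along the segment from `z_y` to `y`
    (V : (Fin 4 → ℝ) → ℝ → Matrix (Fin n) (Fin n) ℂ)
    (hV0 : ∀ y, V y 0 = 1)
    (hV : ∀ y s, HasDerivAt (V y)
      (-(((φ (zpt y + s • (y - zpt y)))⁻¹ * dφ (zpt y + s • (y - zpt y)) (y - zpt y)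
          + (φ (zpt y + s • (y - zpt y)))⁻¹ *
              A (zpt y + s • (y - zpt y)) (y - zpt y) *
              φ (zpt y + s • (y - zpt y))) * V y s)) s)
    -- `A ◁ φ` is light-sink:
    (hls : ∀ y, V y 1 = 1) :
    (∀ y, φ y = U y 1) ∧
    (∀ y v, (φ y)⁻¹ * dφ y v + (φ y)⁻¹ * A y v * φ y
        = (U y 1)⁻¹ * dP y v + (U y 1)⁻¹ * A y v * U y 1) := by
  have hφ_inv : ∀ x, φ x * (φ x)⁻¹ = 1 := fun x =>
    Matrix.mul_nonsing_inv _ (Matrix.UnitaryGroup.det_isUnit ⟨φ x, hφu x⟩)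
  have hφ_axis : ∀ y, φ (zpt y) = 1 := fun y =>
    hφO _ (zpt_apply_of_ne_zero y (by decide)) (zpt_apply_of_ne_zero y (by decide))
      (zpt_apply_of_ne_zero y (by decide))
  have hA_skew : ∀ y v, star (A y v) = -A y v := hA
  have hφ_eq : ∀ y, φ y = U y 1 := by
    intro y
    have hW s : HasDerivAt (fun t => φ (zpt y + t • (y - zpt y)) * V y t)
        (-(A (zpt y + s • (y - zpt y)) (y - zpt y) *
          (φ (zpt y + s • (y - zpt y)) * V y s))) s :=
      ((hdφ _).comp_hasDerivAt s (hasDerivAt_segment _ _ s)).mul_of_gauge (hφ_inv _) (hV y s)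
    have hUU := star_mul_eq_of_skew_transport (fun s => hA_skew _ _) (hU y) (hU y) 0 1
    have hUW := star_mul_eq_of_skew_transport (fun s => hA_skew _ _) (hU y) hW 0 1
    simp only [hU0, hV0, hls, star_one, mul_one, zero_smul, add_zero, one_smul,
      add_sub_cancel, hφ_axis] at hUU hUW
    exact (left_inv_eq_right_inv (mul_eq_one_comm.mp hUU) hUW).symm
  have hdφ_eq y : dφ y = dP y := (funext hφ_eq ▸ hdφ y).unique (hdP y)
  exact ⟨hφ_eq, fun y v => by rw [hφ_eq y, hdφ_eq y]⟩
end
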